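/- arXiv:1504.00994 — 2 statements merged into one kernel-verified Lean document; each statement's English description precedes it below -/
import Mathlib

section
/- Suppose x ∈ A[G] satisfies ρ(x) = 0. Then for every y ∈ A[G] one has y·x − x·y* ∈ J, and for all y, z ∈ A[G] one has (yz − zy)·x ∈ J. Consequently the annihilator { r ∈ R : r·x̄ = 0 } of the image x̄ of x in R = A[G]/J is a two-sided ideal of R containing the image of every commutator yz − zy. -/
open TensorProduct

/-- The two-sided ideal `J ⊆ A[G]` generated by the elements
`g² − (tr ρ(g))·g + (det ρ(g))·1`, for `g ∈ G`. -/
noncomputable def blrIdeal {A : Type} [CommRing A]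
    {V : Type} [AddCommGroup V] [Module A V] [Module.Free A V] [Module.Finite A V]
    {G : Type} [Group G] (ρ : Representation A G V) :
    TwoSidedIdeal (MonoidAlgebra A G) :=
  TwoSidedIdeal.span
    {x : MonoidAlgebra A G | ∃ g : G,
      x = MonoidAlgebra.of A G g * MonoidAlgebra.of A G g
        - LinearMap.trace A V (ρ g) • MonoidAlgebra.of A G g
        + LinearMap.det (ρ g) • (1 : MonoidAlgebra A G)}

/-- The `A`-linear anti-involution `* : A[G] → A[G]` determined on group elements by
`g* = (det ρ(g))·g⁻¹`. -/
noncomputable def blrStar {A : Type} [CommRing A]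
    {V : Type} [AddCommGroup V] [Module A V] [Module.Free A V] [Module.Finite A V]
    {G : Type} [Group G] (ρ : Representation A G V)
    (x : MonoidAlgebra A G) : MonoidAlgebra A G :=
  Finsupp.sum x.coeff fun g a => (a * LinearMap.det (ρ g)) • MonoidAlgebra.of A G g⁻¹

/-!
Multiplying the defining relation of `J` by `g⁻¹` shows that `y + y* ≡ tr ρ(y)` modulo `J` for
every `y`. As `*` is anti-multiplicative and `tr ρ` vanishes on the two-sided ideal `ker ρ`,
applying this to `y x` with `ρ(x) = 0` gives `y x + x y ≡ tr ρ(y) · x`. Both claims and the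
stability of the annihilator under right multiplication are rearrangements of this relation.
-/

theorem TwoSidedIdeal.algebra_smul_mem {A R : Type*} [CommSemiring A] [Ring R] [Algebra A R]
    (I : TwoSidedIdeal R) (a : A) {u : R} (hu : u ∈ I) : a • u ∈ I := by
  rw [Algebra.smul_def]
  exact I.mul_mem_left _ _ hu

section

variable {A : Type} [CommRing A]
    {V : Type} [AddCommGroup V] [Module A V] [Module.Free A V] [Module.Finite A V]
    {G : Type} [Group G] (ρ : Representation A G V)

@[simp]
theorem blrStar_zero : blrStar ρ 0 = 0 :=
  Finsupp.sum_zero_index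

@[simp]
theorem blrStar_add (y z : MonoidAlgebra A G) :
    blrStar ρ (y + z) = blrStar ρ y + blrStar ρ z :=
  Finsupp.sum_add_index' (fun _ => by simp) (fun _ _ _ => by rw [add_mul, add_smul])

@[simp]
theorem blrStar_single (g : G) (a : A) :
    blrStar ρ (MonoidAlgebra.single g a) = (a * LinearMap.det (ρ g)) • MonoidAlgebra.of A G g⁻¹ :=
  Finsupp.sum_single_index (by rw [zero_mul, zero_smul])

theorem blrStar_mul (y z : MonoidAlgebra A G) :
    blrStar ρ (y * z) = blrStar ρ z * blrStar ρ y := by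
  induction y using MonoidAlgebra.induction_linear with
  | zero => simp
  | add y y' hy hy' => simp [add_mul, mul_add, hy, hy']
  | single g a =>
    induction z using MonoidAlgebra.induction_linear with
    | zero => simp
    | add z z' hz hz' => simp [mul_add, add_mul, hz, hz']
    | single h b =>
      simp only [MonoidAlgebra.single_mul_single, blrStar_single, map_mul, mul_inv_rev,
        smul_mul_smul_comm]
      congr 1
      ring

theorem of_sq_sub_trace_add_det_mem_blrIdeal (g : G) :
    MonoidAlgebra.of A G g * MonoidAlgebra.of A G g
      - LinearMap.trace A V (ρ g) • MonoidAlgebra.of A G g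
      + LinearMap.det (ρ g) • (1 : MonoidAlgebra A G) ∈ blrIdeal ρ :=
  TwoSidedIdeal.subset_span ⟨g, rfl⟩

theorem add_blrStar_sub_trace_mem_blrIdeal (y : MonoidAlgebra A G) :
    y + blrStar ρ y - LinearMap.trace A V (ρ.asAlgebraHom y) • 1 ∈ blrIdeal ρ := by
  induction y using MonoidAlgebra.induction_linear with
  | zero => simp
  | add y z hy hz =>
    convert (blrIdeal ρ).add_mem hy hz using 1
    simp only [blrStar_add, map_add, add_smul]
    abel
  | single g a =>
    -- multiply the defining relation of `g` by `a • g⁻¹`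
    have h := (blrIdeal ρ).algebra_smul_mem a
      ((blrIdeal ρ).mul_mem_left (MonoidAlgebra.of A G g⁻¹) _
        (of_sq_sub_trace_add_det_mem_blrIdeal ρ g))
    convert h using 1
    rw [blrStar_single]
    simp only [← MonoidAlgebra.smul_of, map_smul, Representation.asAlgebraHom_of,
      mul_add, mul_sub, mul_smul_comm, ← mul_assoc, ← map_mul, inv_mul_cancel, map_one, one_mul,
      mul_one]
    module

variable {ρ} {x : MonoidAlgebra A G}

theorem mul_add_mul_sub_trace_smul_mem_blrIdeal (hx : ρ.asAlgebraHom x = 0)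
    (y : MonoidAlgebra A G) :
    y * x + x * y - LinearMap.trace A V (ρ.asAlgebraHom y) • x ∈ blrIdeal ρ := by
  set J := blrIdeal ρ
  have hyx := add_blrStar_sub_trace_mem_blrIdeal ρ (y * x)
  have hx' := add_blrStar_sub_trace_mem_blrIdeal ρ x
  have hy' := add_blrStar_sub_trace_mem_blrIdeal ρ y
  simp only [map_mul, hx, mul_zero, map_zero, zero_smul, sub_zero, blrStar_mul] at hyx hx'
  -- `(yx)* = x* y*`, and modulo `J` we have `x* ≡ -x` and `y* ≡ t - y`
  convert J.add_mem (J.sub_mem hyx (J.mul_mem_left (blrStar ρ x) _ hy'))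
    (J.mul_mem_right _ (y - LinearMap.trace A V (ρ.asAlgebraHom y) • 1) hx') using 1
  simp only [mul_sub, add_mul, mul_add, mul_smul_comm, mul_one, smul_add]
  abel

theorem mul_sub_mul_blrStar_mem_blrIdeal (hx : ρ.asAlgebraHom x = 0) (y : MonoidAlgebra A G) :
    y * x - x * blrStar ρ y ∈ blrIdeal ρ := by
  convert (blrIdeal ρ).sub_mem (mul_add_mul_sub_trace_smul_mem_blrIdeal hx y)
    ((blrIdeal ρ).mul_mem_left x _ (add_blrStar_sub_trace_mem_blrIdeal ρ y)) using 1
  simp only [mul_add, mul_sub, mul_smul_comm, mul_one]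
  abel

theorem commutator_mul_mem_blrIdeal (hx : ρ.asAlgebraHom x = 0) (y z : MonoidAlgebra A G) :
    (y * z - z * y) * x ∈ blrIdeal ρ := by
  have hzx : ρ.asAlgebraHom (z * x) = 0 := by rw [map_mul, hx, mul_zero]
  convert (blrIdeal ρ).sub_mem (mul_add_mul_sub_trace_smul_mem_blrIdeal hzx y)
    ((blrIdeal ρ).mul_mem_left z _ (mul_add_mul_sub_trace_smul_mem_blrIdeal hx y)) using 1
  simp only [mul_add, mul_sub, sub_mul, mul_smul_comm, mul_assoc]
  abel

theorem mul_mul_mem_blrIdeal_of_mul_mem (hx : ρ.asAlgebraHom x = 0) {y : MonoidAlgebra A G}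
    (hy : y * x ∈ blrIdeal ρ) (r : MonoidAlgebra A G) : y * r * x ∈ blrIdeal ρ := by
  set J := blrIdeal ρ
  -- `r x ≡ t x - x r` modulo `J`, where `t = tr ρ(r)`
  convert J.add_mem (J.sub_mem (J.mul_mem_left y _ (mul_add_mul_sub_trace_smul_mem_blrIdeal hx r))
    (J.mul_mem_right _ r hy)) (J.algebra_smul_mem (LinearMap.trace A V (ρ.asAlgebraHom r)) hy)
    using 1
  simp only [mul_add, mul_sub, mul_smul_comm, mul_assoc]
  abel

end

theorem annihilator_of_kernel_element_is_twoSided_ideal_containing_commutators_general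
    {A : Type} [CommRing A]
    {V : Type} [AddCommGroup V] [Module A V] [Module.Free A V] [Module.Finite A V]
    {G : Type} [Group G] (ρ : Representation A G V)
    (x : MonoidAlgebra A G) (hx : ρ.asAlgebraHom x = 0) :
    (∀ y : MonoidAlgebra A G, y * x - x * blrStar ρ y ∈ blrIdeal ρ)
    ∧ (∀ y z : MonoidAlgebra A G, (y * z - z * y) * x ∈ blrIdeal ρ)
    -- the annihilator `Ann = { y | y·x ∈ J }` descends to a two-sided ideal of `R = A[G]/J`
    -- containing the image of every commutator:
    ∧ (∀ y z : MonoidAlgebra A G, y * x ∈ blrIdeal ρ → z * x ∈ blrIdeal ρ →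
        (y + z) * x ∈ blrIdeal ρ)
    ∧ (∀ y : MonoidAlgebra A G, y * x ∈ blrIdeal ρ → (-y) * x ∈ blrIdeal ρ)
    ∧ (∀ r y : MonoidAlgebra A G, y * x ∈ blrIdeal ρ →
        (r * y) * x ∈ blrIdeal ρ ∧ (y * r) * x ∈ blrIdeal ρ)
    ∧ (∀ j : MonoidAlgebra A G, j ∈ blrIdeal ρ → j * x ∈ blrIdeal ρ) := by
  refine ⟨mul_sub_mul_blrStar_mem_blrIdeal hx, commutator_mul_mem_blrIdeal hx,
    fun y z hy hz => ?_, fun y hy => ?_, fun r y hy => ⟨?_, mul_mul_mem_blrIdeal_of_mul_mem hx hy r⟩,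
    fun j hj => (blrIdeal ρ).mul_mem_right _ _ hj⟩
  · rw [add_mul]
    exact (blrIdeal ρ).add_mem hy hz
  · rw [neg_mul]
    exact (blrIdeal ρ).neg_mem hy
  · rw [mul_assoc]
    exact (blrIdeal ρ).mul_mem_left _ _ hy

/-- suppose `x ∈ A[G]` satisfies `ρ(x) = 0`.  Then `y·x − x·y* ∈ J` for all
`y`, and `(yz − zy)·x ∈ J` for all `y, z`; consequently, the annihilator
`{ r ∈ R : r·x̄ = 0 }` of the image `x̄` of `x` in `R = A[G]/J` — described here as the
preimage `Ann = { y : y·x ∈ J }` — is a two-sided ideal of `R` containing the image of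
every commutator `yz − zy`. -/
theorem annihilator_of_kernel_element_is_twoSided_ideal_containing_commutators
    {A : Type} [CommRing A] [IsLocalRing A] [IsNoetherianRing A]
    [IsAdicComplete (IsLocalRing.maximalIdeal A) A]
    {V : Type} [AddCommGroup V] [Module A V] [Module.Free A V] [Module.Finite A V]
    (hrank : Module.finrank A V = 2)
    {G : Type} [Group G] (ρ : Representation A G V)
    (hirr : ∀ (K : Type) [Field K] [Algebra A K],
      (∀ a ∈ IsLocalRing.maximalIdeal A, algebraMap A K a = 0) →
      ∀ W : Submodule K (K ⊗[A] V),
        (∀ (g : G), ∀ x ∈ W, LinearMap.baseChange K (ρ g) x ∈ W) → W = ⊥ ∨ W = ⊤)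
    (x : MonoidAlgebra A G) (hx : ρ.asAlgebraHom x = 0) :
    (∀ y : MonoidAlgebra A G, y * x - x * blrStar ρ y ∈ blrIdeal ρ)
    ∧ (∀ y z : MonoidAlgebra A G, (y * z - z * y) * x ∈ blrIdeal ρ)
    -- the annihilator `Ann = { y | y·x ∈ J }` descends to a two-sided ideal of `R = A[G]/J`
    -- containing the image of every commutator:
    ∧ (∀ y z : MonoidAlgebra A G, y * x ∈ blrIdeal ρ → z * x ∈ blrIdeal ρ →
        (y + z) * x ∈ blrIdeal ρ)
    ∧ (∀ y : MonoidAlgebra A G, y * x ∈ blrIdeal ρ → (-y) * x ∈ blrIdeal ρ)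
    ∧ (∀ r y : MonoidAlgebra A G, y * x ∈ blrIdeal ρ →
        (r * y) * x ∈ blrIdeal ρ ∧ (y * r) * x ∈ blrIdeal ρ)
    ∧ (∀ j : MonoidAlgebra A G, j ∈ blrIdeal ρ → j * x ∈ blrIdeal ρ) :=
  annihilator_of_kernel_element_is_twoSided_ideal_containing_commutators_general ρ x hx
end

section
/- K is totally real if and only if 4 divides [F(ζ_p) : F]. In particular, if K is totally real then p ≡ 1 (mod 4). -/
/-!
`L/F` is cyclic Galois and `L` has no real embedding, while `F` is totally real, so for every
`φ : L →+* ℂ` complex conjugation induces a nontrivial `σ ∈ Gal(L/F)` of order `2`; in a cyclic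
group this is the unique involution. `φ` is real on `K` iff `σ` fixes `K`, i.e. iff `σ` lies in
the index-`2` subgroup `Gal(L/K)`, and in a cyclic group of order `n` the involution lies in the
subgroup of index `2` iff `4 ∣ n`. Finally `[L : F]` divides `p - 1`.
-/

open NumberField ComplexEmbedding

theorem IsCyclic.eq_of_orderOf_eq_two {G : Type*} [Group G] [Finite G] [IsCyclic G] {a b : G}
    (ha : orderOf a = 2) (hb : orderOf b = 2) : a = b := by
  classical
  have := Fintype.ofFinite G
  have hcard := IsCyclic.card_orderOf_eq_totient (α := G) (d := 2) (ha ▸ orderOf_dvd_card)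
  rw [Nat.totient_two] at hcard
  exact Finset.card_le_one.1 hcard.le a (by simp [ha]) b (by simp [hb])

theorem IsCyclic.mem_iff_four_dvd_card {G : Type*} [Group G] [Finite G] [IsCyclic G]
    {H : Subgroup G} (hH : H.index = 2) {c : G} (hc : orderOf c = 2) :
    c ∈ H ↔ 4 ∣ Nat.card G := by
  have hcard : Nat.card G = 2 * Nat.card H := by rw [← H.index_mul_card, hH]
  rw [hcard]
  constructor
  · intro hcH
    have : orderOf (⟨c, hcH⟩ : H) ∣ Nat.card H := orderOf_dvd_natCard _
    rw [Subgroup.orderOf_mk, hc] at this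
    omega
  · intro h4
    have : Fact (Nat.Prime 2) := ⟨Nat.prime_two⟩
    obtain ⟨d, hd⟩ := exists_prime_orderOf_dvd_card' (G := H) 2 (by omega)
    rw [← IsCyclic.eq_of_orderOf_eq_two (Subgroup.orderOf_coe d ▸ hd) hc]
    exact d.2

theorem IsPrimitiveRoot.im_ne_zero {z : ℂ} {n : ℕ} (hz : IsPrimitiveRoot z n) (hn : 2 < n) :
    z.im ≠ 0 := by
  intro him
  have hre : (z.re : ℂ) = z := Complex.ext rfl (by simp [him])
  have hpow : z.re ^ n = 1 := by exact_mod_cast hre ▸ hz.pow_eq_one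
  have hsq : z ^ 2 = 1 := by
    rw [← hre]
    rcases (pow_eq_one_iff_of_ne_zero (by omega)).1 hpow with h | ⟨h, -⟩ <;> simp [h]
  have := Nat.le_of_dvd two_pos (hz.dvd_of_pow_eq_one 2 hsq)
  omega

namespace NumberField.ComplexEmbedding

theorem isReal_iff_forall_im_eq_zero {K : Type*} [Field K] {φ : K →+* ℂ} :
    IsReal φ ↔ ∀ x, (φ x).im = 0 := by
  simp only [isReal_iff, RingHom.ext_iff, conjugate_coe_eq, Complex.conj_eq_iff_im]

theorem not_isReal_of_isPrimitiveRoot {K : Type*} [Field K] {ζ : K} {n : ℕ}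
    (hζ : IsPrimitiveRoot ζ n) (hn : 2 < n) (φ : K →+* ℂ) : ¬IsReal φ := fun h ↦
  (hζ.map_of_injective φ.injective).im_ne_zero hn (isReal_iff_forall_im_eq_zero.1 h ζ)

variable {k K : Type*} [Field k] [Field K] [Algebra k K]

theorem exists_isConj_of_isReal_comp [IsGalois k K] {φ : K →+* ℂ}
    (hφ : IsReal (φ.comp (algebraMap k K))) : ∃ σ : Gal(K/k), IsConj φ σ := by
  obtain ⟨σ, hσ⟩ := exists_comp_symm_eq_of_comp_eq (k := k) φ (conjugate φ) <| by
    rw [conjugate_comp, isReal_iff.1 hφ]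
  exact ⟨σ.symm, hσ.symm⟩

theorem IsConj.mem_fixingSubgroup_iff {φ : K →+* ℂ} {σ : Gal(K/k)} (hσ : IsConj φ σ)
    (E : IntermediateField k K) : σ ∈ E.fixingSubgroup ↔ IsReal (φ.comp (algebraMap E K)) := by
  simp only [IntermediateField.mem_fixingSubgroup_iff, isReal_iff, RingHom.ext_iff,
    conjugate_coe_eq, RingHom.comp_apply, Subtype.forall, IntermediateField.algebraMap_apply,
    starRingEnd_apply, ← hσ.eq, φ.injective.eq_iff]

theorem forall_isReal_iff_forall_isReal_comp [Algebra.IsAlgebraic k K] :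
    (∀ ψ : k →+* ℂ, IsReal ψ) ↔ ∀ φ : K →+* ℂ, IsReal (φ.comp (algebraMap k K)) :=
  ⟨fun h _ ↦ h _, fun h ψ ↦ lift_comp_algebraMap K ψ ▸ h (lift K ψ)⟩

end NumberField.ComplexEmbedding

theorem IsPrimitiveRoot.isCyclotomicExtension_of_adjoin_eq_top {F L : Type*} [Field F] [Field L]
    [Algebra F L] [Algebra.IsIntegral F L] {n : ℕ} [NeZero n] {ζ : L} (hζ : IsPrimitiveRoot ζ n)
    (hL : IntermediateField.adjoin F {ζ} = ⊤) : IsCyclotomicExtension {n} F L :=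
  have := hζ.intermediateField_adjoin_isCyclotomicExtension F
  IsCyclotomicExtension.equiv _ F _
    ((IntermediateField.equivOfEq hL).trans IntermediateField.topEquiv)

section Cyclotomic

variable {F L : Type*} [Field F] [Field L] [Algebra F L] {p : ℕ} [Fact p.Prime]
  [IsCyclotomicExtension {p} F L] {ζ : L} (hζ : IsPrimitiveRoot ζ p)
include hζ

theorem IsPrimitiveRoot.isCyclic_gal : IsCyclic Gal(L/F) :=
  isCyclic_of_injective _ (hζ.autToPow_injective F)

theorem IsPrimitiveRoot.card_gal_dvd_sub_one : Nat.card Gal(L/F) ∣ p - 1 := by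
  simpa [Nat.totient_prime Fact.out] using
    Subgroup.card_dvd_of_injective _ (hζ.autToPow_injective F)

end Cyclotomic

theorem forall_isReal_iff_four_dvd_finrank {F L : Type*} [Field F] [Field L] [Algebra F L]
    [FiniteDimensional F L] [IsGalois F L] [IsCyclic Gal(L/F)] [Nonempty (F →+* ℂ)]
    (hF : ∀ ψ : F →+* ℂ, IsReal ψ) (hL : ∀ φ : L →+* ℂ, ¬IsReal φ)
    (K : IntermediateField F L) (hK : Module.finrank F K = 2) :
    (∀ ψ : K →+* ℂ, IsReal ψ) ↔ 4 ∣ Module.finrank F L := by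
  have hindex : K.fixingSubgroup.index = 2 := hK ▸ (K.finrank_eq_fixingSubgroup_index).symm
  have key (φ : L →+* ℂ) : IsReal (φ.comp (algebraMap K L)) ↔ 4 ∣ Module.finrank F L := by
    obtain ⟨σ, hσ⟩ := exists_isConj_of_isReal_comp (hF (φ.comp (algebraMap F L)))
    have hσ2 : orderOf σ = 2 := orderOf_isConj_two_of_ne_one hσ ((isConj_ne_one_iff hσ).2 (hL φ))
    rw [← hσ.mem_fixingSubgroup_iff, IsCyclic.mem_iff_four_dvd_card hindex hσ2,
      IsGalois.card_aut_eq_finrank]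
  have : Nonempty (L →+* ℂ) := ⟨lift L (Classical.arbitrary (F →+* ℂ))⟩
  rw [forall_isReal_iff_forall_isReal_comp (K := L)]
  simp only [key, forall_const]

theorem quadratic_subfield_totally_real_iff_four_dvd_degree_general
    {F L : Type} [Field F] [NumberField F]
    (htrF : ∀ φ : F →+* ℂ, ∀ x : F, (φ x).im = 0)
    (p : ℕ) (hp : p.Prime) (hp2 : p ≠ 2)
    [Field L] [Algebra F L] [FiniteDimensional F L]
    (ζ : L) (hζ : IsPrimitiveRoot ζ p)
    (hL : IntermediateField.adjoin F {ζ} = ⊤)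
    (K : IntermediateField F L) (hK : Module.finrank F K = 2) :
    ((∀ φ : K →+* ℂ, ∀ x : K, (φ x).im = 0) ↔ 4 ∣ Module.finrank F L)
    ∧ ((∀ φ : K →+* ℂ, ∀ x : K, (φ x).im = 0) → p % 4 = 1) := by
  have : Fact p.Prime := ⟨hp⟩
  have : IsCyclotomicExtension {p} F L := hζ.isCyclotomicExtension_of_adjoin_eq_top hL
  have : IsGalois F L := IsCyclotomicExtension.isGalois {p} F L
  have : IsCyclic Gal(L/F) := hζ.isCyclic_gal
  have two_lt : 2 < p := lt_of_le_of_ne hp.two_le hp2.symm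
  have key := forall_isReal_iff_four_dvd_finrank (fun ψ ↦ isReal_iff_forall_im_eq_zero.2 (htrF ψ))
    (not_isReal_of_isPrimitiveRoot hζ two_lt) K hK
  simp only [isReal_iff_forall_im_eq_zero] at key
  refine ⟨key, fun hreal ↦ ?_⟩
  have h4 : 4 ∣ p - 1 :=
    (key.1 hreal).trans (IsGalois.card_aut_eq_finrank F L ▸ hζ.card_gal_dvd_sub_one)
  omega

/-- let `F` be a totally real number field and `p` an odd prime such that
`[F(ζ_p) : F]` is even, and let `K` be the unique intermediate field of `F(ζ_p)/F` with
`[K : F] = 2`.  Then `K` is totally real (every embedding `K → ℂ` has real image) if and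
only if `4` divides `[F(ζ_p) : F]`; in particular, if `K` is totally real then
`p ≡ 1 (mod 4)`. -/
theorem quadratic_subfield_totally_real_iff_four_dvd_degree
    {F L : Type} [Field F] [NumberField F]
    (htrF : ∀ φ : F →+* ℂ, ∀ x : F, (φ x).im = 0)
    (p : ℕ) (hp : p.Prime) (hp2 : p ≠ 2)
    [Field L] [Algebra F L] [FiniteDimensional F L]
    (ζ : L) (hζ : IsPrimitiveRoot ζ p)
    (hL : IntermediateField.adjoin F {ζ} = ⊤)
    (heven : 2 ∣ Module.finrank F L)
    (K : IntermediateField F L) (hK : Module.finrank F K = 2) :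
    ((∀ φ : K →+* ℂ, ∀ x : K, (φ x).im = 0) ↔ 4 ∣ Module.finrank F L)
    ∧ ((∀ φ : K →+* ℂ, ∀ x : K, (φ x).im = 0) → p % 4 = 1) :=
  quadratic_subfield_totally_real_iff_four_dvd_degree_general htrF p hp hp2 ζ hζ hL K hK
end
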